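/- arXiv:1705.10502 — 5 statements merged into one kernel-verified Lean document; each statement's English description precedes it below -/
import Mathlib

section
/- Let C(U), C(X), C(Z) be pretriangulated categories related by gluing and equipped with weight structures compatible with the gluing. Then the restriction of j^* induces an equivalence of categories j^* : C(X)_{w=0,i^*w≤−1,i^!w≥1} → C(U)_{w=0,∂w≠0,1}. (Theorem 0B.) -/
set_option linter.unusedVariables false

open CategoryTheory Limits Pretriangulated

universe w₁ w₂ w₃ w₄ v₁ v₂ v₃ v₄ u₁ u₂ u₃ u₄

/-- A weight structure on a pretriangulated category `C`: a pair of classes of objects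
`(C_{w≤0}, C_{w≥0})`, each containing the zero objects and closed under isomorphisms and
retracts (direct summands), such that `C_{w≤0}[-1] ⊆ C_{w≤0}`, `C_{w≥0}[1] ⊆ C_{w≥0}`,
`Hom(A, B[1]) = 0` for `A ∈ C_{w≤0}`, `B ∈ C_{w≥0}`, and every object admits a weight
filtration. -/
structure WeightStructure (C : Type*) [Category C] [HasZeroObject C] [Preadditive C]
    [HasShift C ℤ] [∀ n : ℤ, (shiftFunctor C n).Additive] [Pretriangulated C] where
  le : C → Prop
  ge : C → Prop
  le_zero : ∀ X : C, IsZero X → le X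
  ge_zero : ∀ X : C, IsZero X → ge X
  le_iso : ∀ {X Y : C}, (X ≅ Y) → le X → le Y
  ge_iso : ∀ {X Y : C}, (X ≅ Y) → ge X → ge Y
  le_retract : ∀ {X Y : C} (s : X ⟶ Y) (r : Y ⟶ X), s ≫ r = 𝟙 X → le Y → le X
  ge_retract : ∀ {X Y : C} (s : X ⟶ Y) (r : Y ⟶ X), s ≫ r = 𝟙 X → ge Y → ge X
  le_shift : ∀ X : C, le X → le (X⟦(-1 : ℤ)⟧)
  ge_shift : ∀ X : C, ge X → ge (X⟦(1 : ℤ)⟧)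
  orth : ∀ {A B : C} (f : A ⟶ B⟦(1 : ℤ)⟧), le A → ge B → f = 0
  exists_weight_filtration : ∀ M : C, ∃ (A B : C) (f : A ⟶ M) (g : M ⟶ B)
    (h : B ⟶ A⟦(1 : ℤ)⟧), (Triangle.mk f g h ∈ distTriang C) ∧ le A ∧ ge (B⟦(-1 : ℤ)⟧)

namespace WeightStructure

variable {C : Type*} [Category C] [HasZeroObject C] [Preadditive C]
    [HasShift C ℤ] [∀ n : ℤ, (shiftFunctor C n).Additive] [Pretriangulated C]

/-- `X ∈ C_{w ≤ n}`, i.e. `X[-n] ∈ C_{w ≤ 0}`. -/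
def leW (w : WeightStructure C) (n : ℤ) (X : C) : Prop := w.le (X⟦(-n : ℤ)⟧)

/-- `X ∈ C_{w ≥ n}`, i.e. `X[-n] ∈ C_{w ≥ 0}`. -/
def geW (w : WeightStructure C) (n : ℤ) (X : C) : Prop := w.ge (X⟦(-n : ℤ)⟧)

/-- The heart `C_{w = 0}`. -/
def heart (w : WeightStructure C) (X : C) : Prop := w.le X ∧ w.ge X

/-- `M` is without weights `m, …, n`: there is a distinguished triangle
`M_{≤ m-1} → M → M_{≥ n+1} → M_{≤ m-1}[1]` with `M_{≤ m-1} ∈ C_{w ≤ m-1}` and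
`M_{≥ n+1} ∈ C_{w ≥ n+1}` (a weight filtration avoiding weights `m, …, n`). -/
def WithoutWeights (w : WeightStructure C) (m n : ℤ) (M : C) : Prop :=
  ∃ (A B : C) (f : A ⟶ M) (g : M ⟶ B) (h : B ⟶ A⟦(1 : ℤ)⟧),
    (Triangle.mk f g h ∈ distTriang C) ∧ w.leW (m - 1) A ∧ w.geW (n + 1) B

end WeightStructure

/-- A weight-exact (exact) functor between pretriangulated categories equipped with
weight structures: `F(C_{w≤0}) ⊆ D_{w≤0}` and `F(C_{w≥0}) ⊆ D_{w≥0}`. -/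
def WeightExact {C : Type*} [Category C] [HasZeroObject C] [Preadditive C]
    [HasShift C ℤ] [∀ n : ℤ, (shiftFunctor C n).Additive] [Pretriangulated C]
    {D : Type*} [Category D] [HasZeroObject D] [Preadditive D]
    [HasShift D ℤ] [∀ n : ℤ, (shiftFunctor D n).Additive] [Pretriangulated D]
    (wC : WeightStructure C) (wD : WeightStructure D) (F : C ⥤ D) : Prop :=
  (∀ X : C, wC.le X → wD.le (F.obj X)) ∧ (∀ X : C, wC.ge X → wD.ge (F.obj X))

variable {CU : Type*} [Category CU] [HasZeroObject CU] [Preadditive CU]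
  [HasShift CU ℤ] [∀ n : ℤ, (shiftFunctor CU n).Additive] [Pretriangulated CU]
variable {CX : Type*} [Category CX] [HasZeroObject CX] [Preadditive CX]
  [HasShift CX ℤ] [∀ n : ℤ, (shiftFunctor CX n).Additive] [Pretriangulated CX]
variable {CZ : Type*} [Category CZ] [HasZeroObject CZ] [Preadditive CZ]
  [HasShift CZ ℤ] [∀ n : ℤ, (shiftFunctor CZ n).Additive] [Pretriangulated CZ]

/- The six gluing functors: `jl = j_!`, `js = j^*`, `jr = j_*`,
   `il = i^*`, `im = i_*`, `ir = i^!`; all of them are exact. -/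
variable (jl : CU ⥤ CX) (js : CX ⥤ CU) (jr : CU ⥤ CX)
  (il : CX ⥤ CZ) (im : CZ ⥤ CX) (ir : CX ⥤ CZ)
  [jl.CommShift ℤ] [jl.IsTriangulated] [js.CommShift ℤ] [js.IsTriangulated]
  [jr.CommShift ℤ] [jr.IsTriangulated] [il.CommShift ℤ] [il.IsTriangulated]
  [im.CommShift ℤ] [im.IsTriangulated] [ir.CommShift ℤ] [ir.IsTriangulated]
  [im.Full] [im.Faithful]
variable (adj₁ : jl ⊣ js) (adj₂ : js ⊣ jr) (adj₃ : il ⊣ im) (adj₄ : im ⊣ ir)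

/-- The axioms of a gluing ("recollement") situation relating `C(U)`, `C(X)` and `C(Z)`:
`j^* ∘ i_* = 0`, the unit `id → j^* j_!` and the counit `j^* j_* → id` are isomorphisms,
and the two localization triangles `j_! j^* M → M → i_* i^* M → (j_! j^* M)[1]` and
`i_* i^! M → M → j_* j^* M → (i_* i^! M)[1]` are distinguished.
(Full faithfulness of `i_*` is part of the ambient variable context.) -/
structure IsGluing : Prop where
  js_im_zero : ∀ Z : CZ, IsZero (js.obj (im.obj Z))
  unit_iso : IsIso adj₁.unit
  counit_iso : IsIso adj₂.counit
  tri₁ : ∀ M : CX, ∃ δ : im.obj (il.obj M) ⟶ (jl.obj (js.obj M))⟦(1 : ℤ)⟧,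
    Triangle.mk (adj₁.counit.app M) (adj₃.unit.app M) δ ∈ distTriang CX
  tri₂ : ∀ M : CX, ∃ δ : jr.obj (js.obj M) ⟶ (im.obj (ir.obj M))⟦(1 : ℤ)⟧,
    Triangle.mk (adj₄.counit.app M) (adj₂.unit.app M) δ ∈ distTriang CX

variable (wU : WeightStructure CU) (wX : WeightStructure CX) (wZ : WeightStructure CZ)

/-- Compatibility of the weight structures on `C(U)`, `C(X)`, `C(Z)` with the gluing:
the left adjoints `j_!`, `j^*`, `i^*`, `i_*` respect `(w ≤ 0)`, and the right adjoints
`j^*`, `j_*`, `i_*`, `i^!` respect `(w ≥ 0)`. -/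
structure GluedWeights : Prop where
  jl_le : ∀ X : CU, wU.le X → wX.le (jl.obj X)
  js_le : ∀ X : CX, wX.le X → wU.le (js.obj X)
  js_ge : ∀ X : CX, wX.ge X → wU.ge (js.obj X)
  il_le : ∀ X : CX, wX.le X → wZ.le (il.obj X)
  im_le : ∀ X : CZ, wZ.le X → wX.le (im.obj X)
  im_ge : ∀ X : CZ, wZ.ge X → wX.ge (im.obj X)
  jr_ge : ∀ X : CU, wU.ge X → wX.ge (jr.obj X)
  ir_ge : ∀ X : CX, wX.ge X → wZ.ge (ir.obj X)


/-!
On objects `M` with `i^* M` of weights `≤ -1` and `N` with `i^! N` of weights `≥ 1`, `j^*` is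
bijective on morphisms: by the triangle `j_! j^* M → M → i_* i^* M`, maps `M → N` are maps
`j_! j^* M → N`, i.e. maps `j^* M → j^* N`, as soon as `Hom(i_* i^* M, N) = Hom(i^* M, i^! N)`
and its shift by `-1` vanish, which they do for weight reasons.

For essential surjectivity, take a weight filtration `A → i^* j_* M_U → B` avoiding weights
`0, 1` and let `M → j_* M_U → i_* B` be the fibre of the map adjoint to
`i^* j_* M_U → B`. Then `j^* M ≅ M_U` since `j^* i_* = 0`; applying `i^*` recovers the
filtration, so `i^* M ≅ A`; and `i^! j_* = 0` (adjoint to `j^* i_* = 0`) gives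
`i^! M ≅ B[-1]`. Weights on `C(X)` are detected by `j^*` together with `i^*` and `i^!`, so `M`
lies in the heart.
-/

namespace CategoryTheory

section

variable {C : Type*} [Category C] [HasZeroObject C] [Preadditive C]
    [HasShift C ℤ] [∀ n : ℤ, (shiftFunctor C n).Additive] [Pretriangulated C]

lemma Pretriangulated.distinguished_mk_of_iso_obj₂ {T : Triangle C} (hT : T ∈ distTriang C)
    {M : C} (e : T.obj₂ ≅ M) :
    Triangle.mk (T.mor₁ ≫ e.hom) (e.inv ≫ T.mor₂) T.mor₃ ∈ distTriang C :=
  isomorphic_distinguished _ hT _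
    (Triangle.isoMk _ _ (Iso.refl _) e.symm (Iso.refl _)
      (show (T.mor₁ ≫ e.hom) ≫ e.inv = 𝟙 T.obj₁ ≫ T.mor₁ by simp)
      (show (e.inv ≫ T.mor₂) ≫ 𝟙 T.obj₃ = e.inv ≫ T.mor₂ by simp)
      (show T.mor₃ ≫ (shiftFunctor C 1).map (𝟙 T.obj₁) = 𝟙 T.obj₃ ≫ T.mor₃ by simp))

lemma Pretriangulated.bijective_mor₁_comp {T : Triangle C} (hT : T ∈ distTriang C)
    {N : C} (h₃ : ∀ f : T.obj₃ ⟶ N, f = 0) (h₃' : ∀ f : T.obj₃⟦(-1 : ℤ)⟧ ⟶ N, f = 0) :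
    Function.Bijective (fun φ : T.obj₂ ⟶ N => T.mor₁ ≫ φ) := by
  refine ⟨fun φ₁ φ₂ h => ?_, fun a => ?_⟩
  · obtain ⟨ψ, hψ⟩ := Triangle.yoneda_exact₂ T hT (φ₁ - φ₂)
      (by rw [Preadditive.comp_sub, sub_eq_zero]; exact h)
    rw [← sub_eq_zero, hψ, h₃ ψ, comp_zero]
  · obtain ⟨φ, hφ⟩ := Triangle.yoneda_exact₂ _ (inv_rot_of_distTriang _ hT) a (h₃' _)
    exact ⟨φ, hφ.symm⟩

lemma Pretriangulated.nonempty_iso_obj₁_of_arrow_iso_mor₂ {T₁ T₂ : Triangle C}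
    (hT₁ : T₁ ∈ distTriang C) (hT₂ : T₂ ∈ distTriang C)
    (e : Arrow.mk T₁.mor₂ ≅ Arrow.mk T₂.mor₂) : Nonempty (T₁.obj₁ ≅ T₂.obj₁) := by
  obtain ⟨e', -⟩ :=
    exists_iso_of_arrow_iso _ _ (rot_of_distTriang _ hT₁) (rot_of_distTriang _ hT₂) e
  exact ⟨(shiftFunctor C (1 : ℤ)).preimageIso (Triangle.π₃.mapIso e')⟩

lemma Adjunction.map_bijective_of_distTriang {D : Type*} [Category D] {L : D ⥤ C} {R : C ⥤ D}
    (adj : L ⊣ R) {M N Q : C} {q : M ⟶ Q} {δ : Q ⟶ (L.obj (R.obj M))⟦(1 : ℤ)⟧}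
    (hT : Triangle.mk (adj.counit.app M) q δ ∈ distTriang C)
    (hQ : ∀ f : Q ⟶ N, f = 0) (hQ' : ∀ f : Q⟦(-1 : ℤ)⟧ ⟶ N, f = 0) :
    Function.Bijective (R.map : (M ⟶ N) → (R.obj M ⟶ R.obj N)) := by
  have : (R.map : (M ⟶ N) → _) = adj.homEquiv _ _ ∘ fun φ => adj.counit.app M ≫ φ := by
    funext φ
    simp [Adjunction.homEquiv_unit]
  rw [this]
  exact (adj.homEquiv _ _).bijective.comp (Pretriangulated.bijective_mor₁_comp hT hQ hQ')

end

lemma Adjunction.isZero_obj_of_forall_isZero_obj {C D : Type*} [Category C] [Category D]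
    [HasZeroMorphisms C] {F : C ⥤ D} {G : D ⥤ C} (adj : F ⊣ G) (h : ∀ X, IsZero (F.obj X))
    (Y : D) : IsZero (G.obj Y) := by
  rw [IsZero.iff_id_eq_zero]
  exact (adj.homEquiv _ _).symm.injective ((h _).eq_of_src _ _)

end CategoryTheory

namespace WeightStructure

variable {C : Type*} [Category C] [HasZeroObject C] [Preadditive C]
    [HasShift C ℤ] [∀ n : ℤ, (shiftFunctor C n).Additive] [Pretriangulated C]
    (w : WeightStructure C)

lemma leW_of_iso {X Y : C} (e : X ≅ Y) {n : ℤ} (h : w.leW n X) : w.leW n Y :=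
  w.le_iso ((shiftFunctor C (-n)).mapIso e) h

lemma geW_of_iso {X Y : C} (e : X ≅ Y) {n : ℤ} (h : w.geW n X) : w.geW n Y :=
  w.ge_iso ((shiftFunctor C (-n)).mapIso e) h

lemma leW_zero_iff {X : C} : w.leW 0 X ↔ w.le X :=
  let e := (shiftFunctorZero' C (-0 : ℤ) (by simp)).app X
  ⟨w.le_iso e, w.le_iso e.symm⟩

lemma geW_zero_iff {X : C} : w.geW 0 X ↔ w.ge X :=
  let e := (shiftFunctorZero' C (-0 : ℤ) (by simp)).app X
  ⟨w.ge_iso e, w.ge_iso e.symm⟩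

lemma leW_shift_iff {X : C} {a m n : ℤ} (h : a + n = m) : w.leW m (X⟦a⟧) ↔ w.leW n X :=
  let e := (shiftFunctorAdd' C a (-m) (-n) (by omega)).app X
  ⟨w.le_iso e.symm, w.le_iso e⟩

lemma geW_shift_iff {X : C} {a m n : ℤ} (h : a + n = m) : w.geW m (X⟦a⟧) ↔ w.geW n X :=
  let e := (shiftFunctorAdd' C a (-m) (-n) (by omega)).app X
  ⟨w.ge_iso e.symm, w.ge_iso e⟩

lemma leW_mono {X : C} {m n : ℤ} (hmn : m ≤ n) (h : w.leW m X) : w.leW n X := by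
  induction n, hmn using Int.leInduction with
  | base => exact h
  | succ k _ ih =>
    exact w.le_iso ((shiftFunctorAdd' C (-k) (-1) (-(k + 1)) (by omega)).app X).symm
      (w.le_shift _ ih)

lemma geW_anti {X : C} {m n : ℤ} (hmn : m ≤ n) (h : w.geW n X) : w.geW m X := by
  induction n, hmn using Int.leInduction with
  | base => exact h
  | succ k _ ih =>
    exact ih (w.ge_iso ((shiftFunctorAdd' C (-(k + 1)) 1 (-k) (by omega)).app X).symm
      (w.ge_shift _ h))

lemma hom_eq_zero_of_leW_of_geW {X Y : C} {m n : ℤ} (hmn : m < n) (hX : w.leW m X) (hY : w.geW n Y)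
    (f : X ⟶ Y) : f = 0 := by
  have hX' : w.le (X⟦1 - n⟧) :=
    w.leW_zero_iff.1 ((w.leW_shift_iff (n := n - 1) (by omega)).2 (w.leW_mono (by omega) hX))
  have hY' : w.geW 1 (Y⟦1 - n⟧) := (w.geW_shift_iff (by omega)).2 hY
  let e := (shiftFunctorCompIsoId C (-1 : ℤ) 1 (by omega)).app (Y⟦1 - n⟧)
  apply (shiftFunctor C (1 - n)).map_injective
  rw [Functor.map_zero, ← cancel_mono e.inv, zero_comp]
  exact w.orth _ hX' hY'

lemma exists_triangle_leW_geW (n : ℤ) (M : C) :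
    ∃ (A B : C) (f : A ⟶ M) (g : M ⟶ B) (h : B ⟶ A⟦(1 : ℤ)⟧),
      Triangle.mk f g h ∈ distTriang C ∧ w.leW n A ∧ w.geW (n + 1) B := by
  obtain ⟨A, B, f, g, h, hT, hA, hB⟩ := w.exists_weight_filtration (M⟦-n⟧)
  let T := (Triangle.shiftFunctor C n).obj (Triangle.mk f g h)
  let e : T.obj₂ ≅ M := (shiftFunctorCompIsoId C (-n) n (by omega)).app M
  refine ⟨T.obj₁, T.obj₃, T.mor₁ ≫ e.hom, e.inv ≫ T.mor₂, T.mor₃,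
    distinguished_mk_of_iso_obj₂ (Triangle.shift_distinguished _ hT n) e,
    (w.leW_shift_iff (by omega)).2 (w.leW_zero_iff.2 hA),
    (w.geW_shift_iff (by omega)).2 hB⟩

lemma le_of_forall_hom_eq_zero {X : C} (h : ∀ B, w.geW 1 B → ∀ g : X ⟶ B, g = 0) : w.le X := by
  obtain ⟨A, B, f, g, _, hT, hA, hB⟩ := w.exists_weight_filtration X
  obtain ⟨s, hs⟩ := Triangle.coyoneda_exact₂ _ hT (𝟙 X) ((Category.id_comp g).trans (h B hB g))
  exact w.le_retract s f hs.symm hA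

lemma ge_of_forall_hom_eq_zero {Y : C} (h : ∀ A, w.leW (-1) A → ∀ f : A ⟶ Y, f = 0) :
    w.ge Y := by
  obtain ⟨A, B, f, g, _, hT, hA, hB⟩ := w.exists_triangle_leW_geW (-1) Y
  obtain ⟨r, hr⟩ := Triangle.yoneda_exact₂ _ hT (𝟙 Y) ((Category.comp_id f).trans (h A hA f))
  exact w.ge_retract g r hr.symm (w.geW_zero_iff.1 hB)

lemma le_of_distTriang {T : Triangle C} (hT : T ∈ distTriang C) (h₁ : w.le T.obj₁)
    (h₃ : w.le T.obj₃) : w.le T.obj₂ :=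
  w.le_of_forall_hom_eq_zero fun _ hB g => by
    obtain ⟨ψ, rfl⟩ := Triangle.yoneda_exact₂ T hT g
      (w.hom_eq_zero_of_leW_of_geW zero_lt_one (w.leW_zero_iff.2 h₁) hB _)
    rw [w.hom_eq_zero_of_leW_of_geW zero_lt_one (w.leW_zero_iff.2 h₃) hB ψ, comp_zero]

lemma ge_of_distTriang {T : Triangle C} (hT : T ∈ distTriang C) (h₁ : w.ge T.obj₁)
    (h₃ : w.ge T.obj₃) : w.ge T.obj₂ :=
  w.ge_of_forall_hom_eq_zero fun _ hA f => by
    obtain ⟨ψ, rfl⟩ := Triangle.coyoneda_exact₂ T hT f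
      (w.hom_eq_zero_of_leW_of_geW neg_one_lt_zero hA (w.geW_zero_iff.2 h₃) _)
    rw [w.hom_eq_zero_of_leW_of_geW neg_one_lt_zero hA (w.geW_zero_iff.2 h₁) ψ, zero_comp]

lemma withoutWeights_of_distTriang {T : Triangle C} (hT : T ∈ distTriang C) {m n : ℤ}
    (h₂ : w.leW (m - 1) T.obj₂) (h₁ : w.geW n T.obj₁) : w.WithoutWeights m n T.obj₃ :=
  ⟨_, _, _, _, _, rot_of_distTriang _ hT, h₂, (w.geW_shift_iff (by omega)).2 h₁⟩

lemma hom_eq_zero_of_adjunction {D : Type*} [Category D] [Preadditive D] {F : C ⥤ D}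
    {G : D ⥤ C} (adj : F ⊣ G) {m n : ℤ} (hmn : m < n) {Z : C} {N : D} (hZ : w.leW m Z)
    (hN : w.geW n (G.obj N)) (f : F.obj Z ⟶ N) : f = 0 :=
  (adj.homEquiv Z N).injective
    ((w.hom_eq_zero_of_leW_of_geW hmn hZ hN _).trans (w.hom_eq_zero_of_leW_of_geW hmn hZ hN _).symm)

lemma hom_shift_eq_zero_of_adjunction {D : Type*} [Category D] [Preadditive D] [HasShift D ℤ]
    {F : C ⥤ D} [F.CommShift ℤ] {G : D ⥤ C} (adj : F ⊣ G) {a m n : ℤ} (h : m + a < n) {Z : C}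
    {N : D} (hZ : w.leW m Z) (hN : w.geW n (G.obj N)) (f : (F.obj Z)⟦a⟧ ⟶ N) : f = 0 := by
  rw [← Preadditive.IsIso.comp_left_eq_zero ((F.commShiftIso a).hom.app Z)]
  exact w.hom_eq_zero_of_adjunction adj h ((w.leW_shift_iff (by omega)).2 hZ) hN _

end WeightStructure

section Gluing

-- Re-declared without the ambient exactness instances, so that each lemma assumes only those
-- it uses.
variable {jl : CU ⥤ CX} {js : CX ⥤ CU} {jr : CU ⥤ CX} {il : CX ⥤ CZ} {im : CZ ⥤ CX}
  {ir : CX ⥤ CZ} {adj₁ : jl ⊣ js} {adj₂ : js ⊣ jr} {adj₃ : il ⊣ im} {adj₄ : im ⊣ ir}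
  {wU : WeightStructure CU} {wX : WeightStructure CX} {wZ : WeightStructure CZ}

lemma heart_of_heart_js (hglue : IsGluing jl js jr il im ir adj₁ adj₂ adj₃ adj₄)
    (hw : GluedWeights jl js jr il im ir wU wX wZ) {M : CX} (hjs : wU.heart (js.obj M))
    (hil : wZ.le (il.obj M)) (hir : wZ.ge (ir.obj M)) : wX.heart M := by
  obtain ⟨δ₁, h₁⟩ := hglue.tri₁ M
  obtain ⟨δ₂, h₂⟩ := hglue.tri₂ M
  exact ⟨wX.le_of_distTriang h₁ (hw.jl_le _ hjs.1) (hw.im_le _ hil),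
    wX.ge_of_distTriang h₂ (hw.im_ge _ hir) (hw.jr_ge _ hjs.2)⟩

lemma exists_heart_js_obj_iso [js.CommShift ℤ] [js.IsTriangulated] [il.CommShift ℤ]
    [il.IsTriangulated] [im.Full] [im.Faithful] [ir.CommShift ℤ] [ir.IsTriangulated]
    (hglue : IsGluing jl js jr il im ir adj₁ adj₂ adj₃ adj₄)
    (hw : GluedWeights jl js jr il im ir wU wX wZ) {MU : CU} (hU : wU.heart MU)
    (hMU : wZ.WithoutWeights 0 1 (il.obj (jr.obj MU))) :
    ∃ M : CX, (wX.heart M ∧ wZ.leW (-1) (il.obj M) ∧ wZ.geW 1 (ir.obj M)) ∧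
      Nonempty (js.obj M ≅ MU) := by
  obtain ⟨A, B, _, g, _, hT, hA, hB⟩ := hMU
  obtain ⟨M, m, m', hM⟩ := distinguished_cocone_triangle₁ (adj₃.homEquiv _ _ g)
  have : IsIso (js.map m) :=
    (Triangle.isZero₃_iff_isIso₁ _ (js.map_distinguished _ hM)).1 (hglue.js_im_zero B)
  have : IsIso adj₂.counit := hglue.counit_iso
  let e : js.obj M ≅ MU := asIso (js.map m) ≪≫ asIso (adj₂.counit.app MU)
  have hil : wZ.leW (-1) (il.obj M) := by
    obtain ⟨e'⟩ := Pretriangulated.nonempty_iso_obj₁_of_arrow_iso_mor₂ hT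
      (il.map_distinguished _ hM) (Arrow.isoMk (Iso.refl _) (asIso (adj₃.counit.app B)).symm
        (show 𝟙 _ ≫ il.map (adj₃.homEquiv _ _ g) = g ≫ inv (adj₃.counit.app B) by
          rw [Category.id_comp, IsIso.eq_comp_inv, ← Adjunction.homEquiv_counit,
            Equiv.symm_apply_apply]))
    exact wZ.leW_of_iso e' hA
  have hir : wZ.geW 1 (ir.obj M) := by
    have hZ : IsZero (ir.obj (jr.obj MU)) :=
      (adj₄.comp adj₂).isZero_obj_of_forall_isZero_obj hglue.js_im_zero MU
    let T := Triangle.mk m (adj₃.homEquiv _ _ g) m'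
    have : IsIso (ir.mapTriangle.obj T).mor₃ :=
      (Triangle.isZero₂_iff_isIso₃ _ (ir.map_distinguished T hM)).1 hZ
    let e₃ := asIso (ir.mapTriangle.obj T).mor₃
    exact (wZ.geW_shift_iff rfl).1 (wZ.geW_of_iso (asIso (adj₄.unit.app B) ≪≫ e₃) hB)
  refine ⟨M, ⟨heart_of_heart_js hglue hw ⟨wU.le_iso e.symm hU.1, wU.ge_iso e.symm hU.2⟩
    (wZ.leW_zero_iff.1 (wZ.leW_mono (by norm_num) hil))
    (wZ.geW_zero_iff.1 (wZ.geW_anti (by norm_num) hir)), hil, hir⟩, ⟨e⟩⟩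

end Gluing

/-- **Theorem 0B.** In a gluing situation with compatible weight structures, the restriction
of `j^*` induces an equivalence of categories
`C(X)_{w=0, i^*w ≤ -1, i^!w ≥ 1} ≃ C(U)_{w=0, ∂w ≠ 0,1}`. -/
theorem restriction_of_js_is_equivalence
    (hglue : IsGluing jl js jr il im ir adj₁ adj₂ adj₃ adj₄)
    (hw : GluedWeights jl js jr il im ir wU wX wZ) :
    ∃ h : ∀ M : ObjectProperty.FullSubcategory
        (fun M : CX => wX.heart M ∧ wZ.leW (-1) (il.obj M) ∧ wZ.geW 1 (ir.obj M)),
      wU.heart (js.obj M.obj) ∧ wZ.WithoutWeights 0 1 (il.obj (jr.obj (js.obj M.obj))),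
      (ObjectProperty.lift
        (fun MU : CU => wU.heart MU ∧ wZ.WithoutWeights 0 1 (il.obj (jr.obj MU)))
        (ObjectProperty.ι
          (fun M : CX => wX.heart M ∧ wZ.leW (-1) (il.obj M) ∧ wZ.geW 1 (ir.obj M)) ⋙ js)
        h).IsEquivalence := by
  have hbij {M N : CX} (hM : wZ.leW (-1) (il.obj M)) (hN : wZ.geW 1 (ir.obj N)) :
      Function.Bijective (js.map : (M ⟶ N) → _) := by
    obtain ⟨δ, hδ⟩ := hglue.tri₁ M
    exact adj₁.map_bijective_of_distTriang hδ
      (wZ.hom_eq_zero_of_adjunction adj₄ (by norm_num) hM hN)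
      (wZ.hom_shift_eq_zero_of_adjunction adj₄ (by norm_num) hM hN)
  refine ⟨fun M => ⟨⟨hw.js_le _ M.2.1.1, hw.js_ge _ M.2.1.2⟩, ?_⟩, ?_⟩
  · obtain ⟨δ, hδ⟩ := hglue.tri₂ M.obj
    exact wZ.withoutWeights_of_distTriang (il.map_distinguished _ hδ) M.2.2.1
      (wZ.geW_of_iso (asIso (adj₃.counit.app _)).symm M.2.2.2)
  refine { faithful := ⟨?_⟩, full := ⟨?_⟩, essSurj := ⟨?_⟩ }
  · intro M N _ _ h
    exact ObjectProperty.hom_ext _ ((hbij M.2.2.1 N.2.2.2).1 (congrArg (·.hom) h))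
  · intro M N f
    obtain ⟨φ, hφ⟩ := (hbij M.2.2.1 N.2.2.2).2 f.hom
    exact ⟨ObjectProperty.homMk φ, ObjectProperty.hom_ext _ hφ⟩
  · intro MU
    obtain ⟨M, hM, ⟨e⟩⟩ := exists_heart_js_obj_iso hglue hw MU.2.1 MU.2.2
    exact ⟨⟨M, hM⟩, ⟨ObjectProperty.isoMk _ e⟩⟩
end

section
/- Let C(U), C(X), C(Z) be pretriangulated categories related by gluing and equipped with weight structures compatible with the gluing. Let M and M' be objects of C(X)_{w=0,i^*w≤−1,i^!w≥1}, and let f : M → M' be a morphism with j^* f = 0. Then f = 0; in other words, the restriction of j^* to C(X)_{w=0,i^*w≤−1,i^!w≥1} is faithful. (Faithfulness step in the proof of Theorem 0B.) -/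
set_option linter.unusedVariables false

open CategoryTheory Limits Pretriangulated

universe w₁ w₂ w₃ w₄ v₁ v₂ v₃ v₄ u₁ u₂ u₃ u₄

variable {CU : Type*} [Category CU] [HasZeroObject CU] [Preadditive CU]
  [HasShift CU ℤ] [∀ n : ℤ, (shiftFunctor CU n).Additive] [Pretriangulated CU]
variable {CX : Type*} [Category CX] [HasZeroObject CX] [Preadditive CX]
  [HasShift CX ℤ] [∀ n : ℤ, (shiftFunctor CX n).Additive] [Pretriangulated CX]
variable {CZ : Type*} [Category CZ] [HasZeroObject CZ] [Preadditive CZ]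
  [HasShift CZ ℤ] [∀ n : ℤ, (shiftFunctor CZ n).Additive] [Pretriangulated CZ]

/- The six gluing functors: `jl = j_!`, `js = j^*`, `jr = j_*`,
   `il = i^*`, `im = i_*`, `ir = i^!`; all of them are exact. -/
variable (jl : CU ⥤ CX) (js : CX ⥤ CU) (jr : CU ⥤ CX)
  (il : CX ⥤ CZ) (im : CZ ⥤ CX) (ir : CX ⥤ CZ)
  [jl.CommShift ℤ] [jl.IsTriangulated] [js.CommShift ℤ] [js.IsTriangulated]
  [jr.CommShift ℤ] [jr.IsTriangulated] [il.CommShift ℤ] [il.IsTriangulated]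
  [im.CommShift ℤ] [im.IsTriangulated] [ir.CommShift ℤ] [ir.IsTriangulated]
  [im.Full] [im.Faithful]
variable (adj₁ : jl ⊣ js) (adj₂ : js ⊣ jr) (adj₃ : il ⊣ im) (adj₄ : im ⊣ ir)

variable (wU : WeightStructure CU) (wX : WeightStructure CX) (wZ : WeightStructure CZ)

/-!
Since `j^* f = 0`, the composite of `f` with the unit `M' ⟶ j_* j^* M'` vanishes, so by the
localization triangle `i_* i^! M' → M' → j_* j^* M' → ` the morphism `f` factors through
`i_* i^! M'`. This object lies in `C(X)_{w ≥ 1}` because `i^! M'` does and `i_*` is weight-exact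
and commutes with shifts, whereas `M ∈ C(X)_{w ≤ 0}`; by orthogonality the factor vanishes.
-/

namespace WeightStructure

variable {C : Type*} [Category C] [HasZeroObject C] [Preadditive C]
    [HasShift C ℤ] [∀ n : ℤ, (shiftFunctor C n).Additive] [Pretriangulated C]

theorem hom_eq_zero_of_le_of_geW_one (w : WeightStructure C) {A B : C}
    (hA : w.le A) (hB : w.geW 1 B) (f : A ⟶ B) : f = 0 := by
  let e := (shiftFunctorCompIsoId C (-1 : ℤ) 1 (by omega)).app B
  have : f ≫ e.inv = 0 := w.orth _ hA hB
  simpa using this =≫ e.hom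

theorem geW_obj_of_ge {D : Type*} [Category D] [HasZeroObject D] [Preadditive D]
    [HasShift D ℤ] [∀ n : ℤ, (shiftFunctor D n).Additive] [Pretriangulated D]
    (wC : WeightStructure C) (wD : WeightStructure D) (F : C ⥤ D) [F.CommShift ℤ]
    (hF : ∀ X : C, wC.ge X → wD.ge (F.obj X)) {n : ℤ} {X : C} (hX : wC.geW n X) :
    wD.geW n (F.obj X) :=
  wD.ge_iso ((F.commShiftIso (-n)).app X) (hF _ hX)

end WeightStructure

theorem CategoryTheory.Adjunction.comp_unit_app_eq_zero_of_map_eq_zero {C D : Type*}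
    [Category C] [Category D] [HasZeroMorphisms C] [HasZeroMorphisms D]
    {F : C ⥤ D} {G : D ⥤ C} [G.PreservesZeroMorphisms]
    (adj : F ⊣ G) {X Y : C} {f : X ⟶ Y} (hf : F.map f = 0) : f ≫ adj.unit.app Y = 0 := by
  rw [← adj.unit_naturality f, hf, Functor.map_zero, comp_zero]

/-- **Faithfulness step in the proof of Theorem 0B.** If `M, M'` belong to
`C(X)_{w=0, i^*w ≤ -1, i^!w ≥ 1}` and `f : M ⟶ M'` satisfies `j^* f = 0`, then `f = 0`. -/
theorem restriction_of_js_is_faithful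
    (hglue : IsGluing jl js jr il im ir adj₁ adj₂ adj₃ adj₄)
    (hw : GluedWeights jl js jr il im ir wU wX wZ)
    (M M' : CX)
    (hM : wX.heart M ∧ wZ.leW (-1) (il.obj M) ∧ wZ.geW 1 (ir.obj M))
    (hM' : wX.heart M' ∧ wZ.leW (-1) (il.obj M') ∧ wZ.geW 1 (ir.obj M'))
    (f : M ⟶ M') (hf : js.map f = 0) : f = 0 := by
  obtain ⟨δ, hT⟩ := hglue.tri₂ M'
  obtain ⟨g, rfl⟩ := Triangle.coyoneda_exact₂ _ hT f
    (adj₂.comp_unit_app_eq_zero_of_map_eq_zero hf)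
  have hgeW : wX.geW 1 (im.obj (ir.obj M')) :=
    WeightStructure.geW_obj_of_ge wZ wX im hw.im_ge hM'.2.2
  exact (wX.hom_eq_zero_of_le_of_geW_one hM.1.1 hgeW g) ▸ zero_comp
end

section
/- Let C(U), C(X), C(Z) be pretriangulated categories related by gluing and equipped with weight structures compatible with the gluing. For every object M of C(X)_{w=0,i^*w≤−1,i^!w≥1}, the unit and counit maps yield a distinguished triangle i^* M → i^* j_* j^* M → (i^! M)[1] → (i^* M)[1]; since i^* M ∈ C(Z)_{w≤−1} and (i^! M)[1] ∈ C(Z)_{w≥2}, this is a weight filtration of i^* j_* j^* M avoiding weights 0 and 1. In particular, j^* maps C(X)_{w=0,i^*w≤−1,i^!w≥1} into C(U)_{w=0,∂w≠0,1}. (Essential-image step in the proof of Theorem 0B.) -/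
set_option linter.unusedVariables false

open CategoryTheory Limits Pretriangulated

universe w₁ w₂ w₃ w₄ v₁ v₂ v₃ v₄ u₁ u₂ u₃ u₄

variable {CU : Type*} [Category CU] [HasZeroObject CU] [Preadditive CU]
  [HasShift CU ℤ] [∀ n : ℤ, (shiftFunctor CU n).Additive] [Pretriangulated CU]
variable {CX : Type*} [Category CX] [HasZeroObject CX] [Preadditive CX]
  [HasShift CX ℤ] [∀ n : ℤ, (shiftFunctor CX n).Additive] [Pretriangulated CX]
variable {CZ : Type*} [Category CZ] [HasZeroObject CZ] [Preadditive CZ]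
  [HasShift CZ ℤ] [∀ n : ℤ, (shiftFunctor CZ n).Additive] [Pretriangulated CZ]

/- The six gluing functors: `jl = j_!`, `js = j^*`, `jr = j_*`,
   `il = i^*`, `im = i_*`, `ir = i^!`; all of them are exact. -/
variable (jl : CU ⥤ CX) (js : CX ⥤ CU) (jr : CU ⥤ CX)
  (il : CX ⥤ CZ) (im : CZ ⥤ CX) (ir : CX ⥤ CZ)
  [jl.CommShift ℤ] [jl.IsTriangulated] [js.CommShift ℤ] [js.IsTriangulated]
  [jr.CommShift ℤ] [jr.IsTriangulated] [il.CommShift ℤ] [il.IsTriangulated]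
  [im.CommShift ℤ] [im.IsTriangulated] [ir.CommShift ℤ] [ir.IsTriangulated]
  [im.Full] [im.Faithful]
variable (adj₁ : jl ⊣ js) (adj₂ : js ⊣ jr) (adj₃ : il ⊣ im) (adj₄ : im ⊣ ir)

variable (wU : WeightStructure CU) (wX : WeightStructure CX) (wZ : WeightStructure CZ)

/-!
Apply `i^*` to the localization triangle `i_* i^! M → M → j_* j^* M → (i_* i^! M)[1]`
and rotate it. Since `i_*` is fully faithful, the counit `i^* i_* → id` is an isomorphism,
so the result is a distinguished triangle `i^* M → i^* j_* j^* M → (i^! M)[1] → (i^* M)[1]`.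
Its outer terms lie in weights `≤ -1` and `≥ 2` by hypothesis, so it is a weight filtration
of `i^* j_* j^* M` avoiding weights `0` and `1`; and `j^*` preserves the heart because it is
weight-exact in both directions.
-/

namespace WeightStructure

variable {C : Type*} [Category C] [HasZeroObject C] [Preadditive C]
    [HasShift C ℤ] [∀ n : ℤ, (shiftFunctor C n).Additive] [Pretriangulated C]

lemma geW_shift (w : WeightStructure C) {X : C} {n : ℤ} (a : ℤ) (h : w.geW n X) :
    w.geW (n + a) (X⟦a⟧) :=
  w.ge_iso ((shiftFunctorAdd' C a (-(n + a)) (-n) (by ring)).app X) h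

end WeightStructure

lemma CategoryTheory.Pretriangulated.mk_comp_iso_distinguished
    {C : Type*} [Category C] [HasZeroObject C] [Preadditive C]
    [HasShift C ℤ] [∀ n : ℤ, (shiftFunctor C n).Additive] [Pretriangulated C]
    {X Y Z Z' : C} (f : X ⟶ Y) (g : Y ⟶ Z) (h : Z ⟶ X⟦(1 : ℤ)⟧)
    (hT : Triangle.mk f g h ∈ distTriang C) (e : Z ≅ Z') :
    Triangle.mk f (g ≫ e.hom) (e.inv ≫ h) ∈ distTriang C :=
  isomorphic_distinguished _ hT _ (Triangle.isoMk _ _ (Iso.refl _) (Iso.refl _) e.symm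
    ((Category.comp_id _).trans (Category.id_comp _).symm)
    ((Category.assoc _ _ _).trans ((congrArg (g ≫ ·) e.hom_inv_id).trans
      ((Category.comp_id _).trans (Category.id_comp _).symm)))
    ((congrArg (_ ≫ ·) ((shiftFunctor C (1 : ℤ)).map_id _)).trans (Category.comp_id _)))

lemma CategoryTheory.Adjunction.exists_distTriang_map_of_distTriang
    {C : Type*} [Category C] [HasZeroObject C] [Preadditive C]
    [HasShift C ℤ] [∀ n : ℤ, (shiftFunctor C n).Additive] [Pretriangulated C]
    {D : Type*} [Category D] [HasZeroObject D] [Preadditive D]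
    [HasShift D ℤ] [∀ n : ℤ, (shiftFunctor D n).Additive] [Pretriangulated D]
    {L : C ⥤ D} {R : D ⥤ C} (adj : L ⊣ R) [L.CommShift ℤ] [L.IsTriangulated]
    [R.Full] [R.Faithful] {Y : D} {M N : C} (a : R.obj Y ⟶ M) (f : M ⟶ N)
    (δ : N ⟶ (R.obj Y)⟦(1 : ℤ)⟧) (hT : Triangle.mk a f δ ∈ distTriang C) :
    ∃ (g : L.obj N ⟶ Y⟦(1 : ℤ)⟧) (h : Y⟦(1 : ℤ)⟧ ⟶ (L.obj M)⟦(1 : ℤ)⟧),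
      Triangle.mk (L.map f) g h ∈ distTriang D := by
  let T := (L.mapTriangle.obj (Triangle.mk a f δ)).rotate
  have hT' : T ∈ distTriang D := rot_of_distTriang _ (L.map_distinguished _ hT)
  let e : T.obj₃ ≅ Y⟦(1 : ℤ)⟧ := (shiftFunctor D (1 : ℤ)).mapIso ((asIso adj.counit).app Y)
  exact ⟨_, _, mk_comp_iso_distinguished _ _ _ hT' e⟩

/-- **Essential-image step in the proof of Theorem 0B.** For every
`M ∈ C(X)_{w=0, i^*w ≤ -1, i^!w ≥ 1}`, the unit and counit maps yield a distinguished
triangle `i^* M → i^* j_* j^* M → (i^! M)[1] → (i^* M)[1]`; one has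
`i^* M ∈ C(Z)_{w ≤ -1}` and `(i^! M)[1] ∈ C(Z)_{w ≥ 2}`, so this is a weight filtration
of `i^* j_* j^* M` avoiding weights `0` and `1`. In particular `j^* M` belongs to
`C(U)_{w=0, ∂w ≠ 0,1}`. -/
theorem js_maps_into_boundary_avoiding
    (hglue : IsGluing jl js jr il im ir adj₁ adj₂ adj₃ adj₄)
    (hw : GluedWeights jl js jr il im ir wU wX wZ)
    (M : CX)
    (hM : wX.heart M ∧ wZ.leW (-1) (il.obj M) ∧ wZ.geW 1 (ir.obj M)) :
    (∃ (g : il.obj (jr.obj (js.obj M)) ⟶ (ir.obj M)⟦(1 : ℤ)⟧)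
        (h : (ir.obj M)⟦(1 : ℤ)⟧ ⟶ (il.obj M)⟦(1 : ℤ)⟧),
      Triangle.mk (il.map (adj₂.unit.app M)) g h ∈ distTriang CZ) ∧
    wZ.leW (-1) (il.obj M) ∧ wZ.geW 2 ((ir.obj M)⟦(1 : ℤ)⟧) ∧
    wZ.WithoutWeights 0 1 (il.obj (jr.obj (js.obj M))) ∧
    wU.heart (js.obj M) := by
  obtain ⟨⟨hMle, hMge⟩, hle, hge⟩ := hM
  obtain ⟨δ, hT⟩ := hglue.tri₂ M
  obtain ⟨g, h, hTZ⟩ := adj₃.exists_distTriang_map_of_distTriang _ _ _ hT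
  have hge₂ : wZ.geW 2 ((ir.obj M)⟦(1 : ℤ)⟧) := wZ.geW_shift 1 hge
  exact ⟨⟨g, h, hTZ⟩, hle, hge₂,
    ⟨_, _, _, _, _, hTZ, by simpa using hle, by simpa using hge₂⟩,
    hw.js_le M hMle, hw.js_ge M hMge⟩
end

section
/- Let C(U), C(X), C(Z) be pretriangulated categories related by gluing and equipped with weight structures compatible with the gluing, and let D_U, D_X, D_Z be contravariant exact auto-equivalences compatible with the gluing and with the weight structures. Then D_U maps C(U)_{w=0,∂w≠0,1} into itself, D_X maps C(X)_{w=0,i^*w≤−1,i^!w≥1} into itself, and, denoting by j_{!*} the composition of the inverse of the equivalence j^* : C(X)_{w=0,i^*w≤−1,i^!w≥1} ≃ C(U)_{w=0,∂w≠0,1} with the inclusion into C(X)_{w=0}, one has an isomorphism of functors D_X ∘ j_{!*} ≅ j_{!*} ∘ D_U on C(U)_{w=0,∂w≠0,1}. (Remark 0Ca.) -/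
/-!
Since `D_Z` commutes with `i_*`, uniqueness of adjoints gives `i^* D_X ≅ D_Z i^!`, and
`i^! D_X ≅ D_Z i^*` is part of the hypotheses; as the dualities reverse weights, `D_X` swaps the
conditions `i^* M ∈ C(Z)_{w≤-1}` and `i^! M ∈ C(Z)_{w≥1}`. For the boundary condition, the cone of
the canonical map `j_! N → j_* N` is both `i_* i^* j_* N` and `(i_* i^! j_! N)[1]`, whence
`i^* j_* D_U M_U ≅ (D_Z i^* j_* M_U)[1]`: duality turns "without weights `0, 1`" into "without
weights `-1, 0`", and the shift by `1` restores it. Finally `j^* D_X ≅ D_U j^*` compares the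
restrictions to `U`.
-/

set_option linter.unusedVariables false

open CategoryTheory Limits Pretriangulated

universe w₁ w₂ w₃ w₄ v₁ v₂ v₃ v₄ u₁ u₂ u₃ u₄

variable {CU : Type*} [Category CU] [HasZeroObject CU] [Preadditive CU]
  [HasShift CU ℤ] [∀ n : ℤ, (shiftFunctor CU n).Additive] [Pretriangulated CU]
variable {CX : Type*} [Category CX] [HasZeroObject CX] [Preadditive CX]
  [HasShift CX ℤ] [∀ n : ℤ, (shiftFunctor CX n).Additive] [Pretriangulated CX]
variable {CZ : Type*} [Category CZ] [HasZeroObject CZ] [Preadditive CZ]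
  [HasShift CZ ℤ] [∀ n : ℤ, (shiftFunctor CZ n).Additive] [Pretriangulated CZ]

/- The six gluing functors: `jl = j_!`, `js = j^*`, `jr = j_*`,
   `il = i^*`, `im = i_*`, `ir = i^!`; all of them are exact. -/
variable (jl : CU ⥤ CX) (js : CX ⥤ CU) (jr : CU ⥤ CX)
  (il : CX ⥤ CZ) (im : CZ ⥤ CX) (ir : CX ⥤ CZ)
  [jl.CommShift ℤ] [jl.IsTriangulated] [js.CommShift ℤ] [js.IsTriangulated]
  [jr.CommShift ℤ] [jr.IsTriangulated] [il.CommShift ℤ] [il.IsTriangulated]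
  [im.CommShift ℤ] [im.IsTriangulated] [ir.CommShift ℤ] [ir.IsTriangulated]
  [im.Full] [im.Faithful]
variable (adj₁ : jl ⊣ js) (adj₂ : js ⊣ jr) (adj₃ : il ⊣ im) (adj₄ : im ⊣ ir)

variable (wU : WeightStructure CU) (wX : WeightStructure CX) (wZ : WeightStructure CZ)

open CategoryTheory.Pretriangulated.Opposite Opposite

noncomputable def CategoryTheory.Functor.mapOpShiftIso {C E : Type*} [Category C] [Category E]
    [HasShift C ℤ] [HasShift E ℤ] (D : Cᵒᵖ ⥤ E) [D.CommShift ℤ] (X : C) (n : ℤ) :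
    D.obj (op (X⟦-n⟧)) ≅ (D.obj (op X))⟦n⟧ :=
  D.mapIso ((shiftFunctorOpIso C n (-n) (add_neg_cancel n)).app (op X)).symm ≪≫
    (D.commShiftIso n).app (op X)

namespace WeightStructure

variable {C : Type*} [Category C] [HasZeroObject C] [Preadditive C]
    [HasShift C ℤ] [∀ n : ℤ, (shiftFunctor C n).Additive] [Pretriangulated C]
    {w : WeightStructure C}

lemma leW.of_iso {X Y : C} {n : ℤ} (h : w.leW n X) (e : X ≅ Y) : w.leW n Y :=
  w.le_iso ((shiftFunctor C (-n)).mapIso e) h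

lemma geW.of_iso {X Y : C} {n : ℤ} (h : w.geW n X) (e : X ≅ Y) : w.geW n Y :=
  w.ge_iso ((shiftFunctor C (-n)).mapIso e) h

lemma leW.shift {X : C} {n : ℤ} (h : w.leW n X) (k : ℤ) : w.leW (n + k) (X⟦k⟧) :=
  w.le_iso ((shiftFunctorAdd' C k (-(n + k)) (-n) (by ring)).app X) h

lemma geW.shift {X : C} {n : ℤ} (h : w.geW n X) (k : ℤ) : w.geW (n + k) (X⟦k⟧) :=
  w.ge_iso ((shiftFunctorAdd' C k (-(n + k)) (-n) (by ring)).app X) h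

variable {D : Cᵒᵖ ⥤ C} [D.CommShift ℤ]

lemma geW.dual (hD : ∀ X : C, w.ge X → w.le (D.obj (op X))) {X : C} {n : ℤ}
    (h : w.geW n X) : w.leW (-n) (D.obj (op X)) := by
  rw [leW, neg_neg]
  exact w.le_iso (D.mapOpShiftIso X n) (hD _ h)

lemma leW.dual (hD : ∀ X : C, w.le X → w.ge (D.obj (op X))) {X : C} {n : ℤ}
    (h : w.leW n X) : w.geW (-n) (D.obj (op X)) := by
  rw [geW, neg_neg]
  exact w.ge_iso (D.mapOpShiftIso X n) (hD _ h)

namespace WithoutWeights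

variable {m n : ℤ} {M : C}

lemma of_iso (h : w.WithoutWeights m n M) {M' : C} (e : M ≅ M') :
    w.WithoutWeights m n M' := by
  obtain ⟨A, B, f, g, δ, hT, hA, hB⟩ := h
  refine ⟨A, B, f ≫ e.hom, e.inv ≫ g, δ, isomorphic_distinguished _ hT _
    (Triangle.isoMk _ _ (Iso.refl _) e.symm (Iso.refl _) ?_ ?_ ?_), hA, hB⟩ <;>
  simp [Triangle.mk]

lemma shift (h : w.WithoutWeights m n M) (k : ℤ) :
    w.WithoutWeights (m + k) (n + k) (M⟦k⟧) := by
  obtain ⟨A, B, f, g, δ, hT, hA, hB⟩ := h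
  refine ⟨A⟦k⟧, B⟦k⟧, _, _, _, Triangle.shift_distinguished _ hT k, ?_, ?_⟩
  · rw [show m + k - 1 = m - 1 + k by ring]
    exact hA.shift k
  · rw [show n + k + 1 = n + 1 + k by ring]
    exact hB.shift k

lemma dual [D.IsTriangulated] (hD₁ : ∀ X : C, w.ge X → w.le (D.obj (op X)))
    (hD₂ : ∀ X : C, w.le X → w.ge (D.obj (op X))) (h : w.WithoutWeights m n M) :
    w.WithoutWeights (-n) (-m) (D.obj (op M)) := by
  obtain ⟨A, B, f, g, δ, hT, hA, hB⟩ := h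
  refine ⟨D.obj (op B), D.obj (op A), _, _, _, D.map_distinguished _ (op_distinguished _ hT),
    ?_, ?_⟩
  · rw [show -n - 1 = -(n + 1) by ring]
    exact hB.dual hD₁
  · rw [show -m + 1 = -(m - 1) by ring]
    exact hA.dual hD₂

end WithoutWeights

end WeightStructure

section Gluing

variable {CU CX CZ : Type*} [Category CU] [Category CX] [Category CZ]
  [HasZeroObject CX] [Preadditive CX] [HasShift CX ℤ] [∀ n : ℤ, (shiftFunctor CX n).Additive]
  [Pretriangulated CX] [HasShift CZ ℤ]
  {jl : CU ⥤ CX} {js : CX ⥤ CU} {jr : CU ⥤ CX} {il : CX ⥤ CZ} {im : CZ ⥤ CX} {ir : CX ⥤ CZ}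
  {adj₁ : jl ⊣ js} {adj₂ : js ⊣ jr} {adj₃ : il ⊣ im} {adj₄ : im ⊣ ir}

lemma IsGluing.nonempty_shift_ir_jl_iso_il_jr [im.CommShift ℤ] [im.Full] [im.Faithful]
    (hglue : IsGluing jl js jr il im ir adj₁ adj₂ adj₃ adj₄) (N : CU) :
    Nonempty ((ir.obj (jl.obj N))⟦(1 : ℤ)⟧ ≅ il.obj (jr.obj N)) := by
  have := hglue.unit_iso
  have := hglue.counit_iso
  have := adj₁.fullyFaithfulLOfIsIsoUnit.full
  have := adj₁.fullyFaithfulLOfIsIsoUnit.faithful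
  let t : Adjunction.Triple jl js jr := ⟨adj₁, adj₂⟩
  -- both sides are the canonical map `j_! N → j_* N`, so the two localization triangles are
  -- cones of the same morphism
  have comm : adj₂.unit.app (jl.obj N) ≫ jr.map (inv (adj₁.unit.app N)) =
      jl.map (inv (adj₂.counit.app N)) ≫ adj₁.counit.app (jr.obj N) := by
    rw [← t.leftToRight_app_map_adj₁_unit_app N, ← t.map_adj₂_counit_app_leftToRight_app N]
    simp only [t, Functor.map_inv, Category.assoc, IsIso.hom_inv_id, IsIso.inv_hom_id_assoc,
      Category.comp_id]
  obtain ⟨δ₁, h₁⟩ := hglue.tri₂ (jl.obj N)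
  obtain ⟨δ₂, h₂⟩ := hglue.tri₁ (jr.obj N)
  let e := isoTriangleOfIso₁₂ _ _ (rot_of_distTriang _ h₁) h₂
    (jl.mapIso (asIso (adj₂.counit.app N)).symm) (jr.mapIso (asIso (adj₁.unit.app N)).symm) comm
  exact ⟨im.preimageIso ((im.commShiftIso (1 : ℤ)).app _ ≪≫ Triangle.π₃.mapIso e)⟩

end Gluing

noncomputable def CategoryTheory.Adjunction.Triple.dualLeftIso {CX CZ : Type*} [Category CX]
    [Category CZ] {il : CX ⥤ CZ} {im : CZ ⥤ CX} {ir : CX ⥤ CZ} (t : Adjunction.Triple il im ir)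
    (DX : CXᵒᵖ ⥤ CX) (DZ : CZᵒᵖ ⥤ CZ) [DX.IsEquivalence] [DZ.IsEquivalence]
    (e : im.op ⋙ DX ≅ DZ ⋙ im) : DX ⋙ il ≅ ir.op ⋙ DZ :=
  -- `DX ⋙ il` and `ir.op ⋙ DZ` are left adjoint to `im ⋙ DX⁻¹` and `DZ⁻¹ ⋙ im.op`,
  -- which `e` identifies
  let EX := DX.asEquivalence
  let EZ := DZ.asEquivalence
  (conjugateIsoEquiv (t.adj₂.op.comp EZ.toAdjunction) (EX.toAdjunction.comp t.adj₁)).symm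
    (Functor.isoWhiskerRight EZ.counitIso.symm (im ⋙ EX.inverse) ≪≫
      Functor.isoWhiskerLeft EZ.inverse (Functor.isoWhiskerRight e.symm EX.inverse ≪≫
        Functor.isoWhiskerLeft im.op EX.unitIso.symm)).symm

open CategoryTheory.Pretriangulated.Opposite in
theorem duality_commutes_with_intermediate_extension
    (hglue : IsGluing jl js jr il im ir adj₁ adj₂ adj₃ adj₄)
    (DU : CUᵒᵖ ⥤ CU) (DX : CXᵒᵖ ⥤ CX) (DZ : CZᵒᵖ ⥤ CZ)
    [DX.IsEquivalence] [DZ.IsEquivalence]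
    [DZ.CommShift ℤ] [DZ.IsTriangulated]
    (e₁ : jr.op ⋙ DX ≅ DU ⋙ jl)
    (e₂ : js.op ⋙ DU ≅ DX ⋙ js)
    (e₃ : im.op ⋙ DX ≅ DZ ⋙ im)
    (e₄ : il.op ⋙ DZ ≅ DX ⋙ ir)
    (hDU₁ : ∀ X : CU, wU.ge X → wU.le (DU.obj (Opposite.op X)))
    (hDU₂ : ∀ X : CU, wU.le X → wU.ge (DU.obj (Opposite.op X)))
    (hDX₁ : ∀ X : CX, wX.ge X → wX.le (DX.obj (Opposite.op X)))
    (hDX₂ : ∀ X : CX, wX.le X → wX.ge (DX.obj (Opposite.op X)))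
    (hDZ₁ : ∀ X : CZ, wZ.ge X → wZ.le (DZ.obj (Opposite.op X)))
    (hDZ₂ : ∀ X : CZ, wZ.le X → wZ.ge (DZ.obj (Opposite.op X))) :
    (∀ MU : CU, wU.heart MU ∧ wZ.WithoutWeights 0 1 (il.obj (jr.obj MU)) →
      wU.heart (DU.obj (Opposite.op MU)) ∧
        wZ.WithoutWeights 0 1 (il.obj (jr.obj (DU.obj (Opposite.op MU))))) ∧
    (∀ M : CX, (wX.heart M ∧ wZ.leW (-1) (il.obj M) ∧ wZ.geW 1 (ir.obj M)) →
      (wX.heart (DX.obj (Opposite.op M)) ∧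
        wZ.leW (-1) (il.obj (DX.obj (Opposite.op M))) ∧
        wZ.geW 1 (ir.obj (DX.obj (Opposite.op M))))) ∧
    (∀ (MU : CU) (M : CX),
      (wU.heart MU ∧ wZ.WithoutWeights 0 1 (il.obj (jr.obj MU))) →
      (wX.heart M ∧ wZ.leW (-1) (il.obj M) ∧ wZ.geW 1 (ir.obj M)) →
      Nonempty (js.obj M ≅ MU) →
      Nonempty (js.obj (DX.obj (Opposite.op M)) ≅ DU.obj (Opposite.op MU))) := by
  refine ⟨?_, ?_, ?_⟩
  · rintro MU ⟨hMU, hwMU⟩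
    refine ⟨⟨hDU₁ MU hMU.2, hDU₂ MU hMU.1⟩, ?_⟩
    obtain ⟨cone⟩ := hglue.nonempty_shift_ir_jl_iso_il_jr (DU.obj (op MU))
    have h := ((hwMU.dual hDZ₁ hDZ₂).shift 1).of_iso ((shiftFunctor CZ (1 : ℤ)).mapIso
      (e₄.app (op (jr.obj MU)) ≪≫ ir.mapIso (e₁.app (op MU))) ≪≫ cone)
    rwa [neg_add_cancel, neg_zero, zero_add] at h
  · rintro M ⟨hM, hle, hge⟩
    let α := (Adjunction.Triple.mk adj₃ adj₄).dualLeftIso DX DZ e₃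
    refine ⟨⟨hDX₁ M hM.2, hDX₂ M hM.1⟩, (hge.dual hDZ₁).of_iso (α.app (op M)).symm, ?_⟩
    simpa only [neg_neg, Functor.comp_obj] using (hle.dual hDZ₂).of_iso (e₄.app (op M))
  · rintro MU M - - ⟨e⟩
    exact ⟨(e₂.app (op M)).symm ≪≫ (DU.mapIso e.op).symm⟩
end

section
/- Let C(U), C(X), C(Z) be pretriangulated categories related by gluing and equipped with weight structures compatible with the gluing. Let M ∈ C(X)_{w=0,i^*w≤−1,i^!w≥1} and N ∈ C(Z)_{w=0}, and suppose there exist morphisms p : i_* N → M and q : M → i_* N with q ∘ p = id_{i_* N}. Then N ≅ 0. In other words, objects of C(X)_{w=0,i^*w≤−1,i^!w≥1} admit no non-zero direct factors belonging to the image of the heart C(Z)_{w=0} under i_*. (Remark 0D (a).) -/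
set_option linter.unusedVariables false

open CategoryTheory Limits Pretriangulated

universe w₁ w₂ w₃ w₄ v₁ v₂ v₃ v₄ u₁ u₂ u₃ u₄

variable {CU : Type*} [Category CU] [HasZeroObject CU] [Preadditive CU]
  [HasShift CU ℤ] [∀ n : ℤ, (shiftFunctor CU n).Additive] [Pretriangulated CU]
variable {CX : Type*} [Category CX] [HasZeroObject CX] [Preadditive CX]
  [HasShift CX ℤ] [∀ n : ℤ, (shiftFunctor CX n).Additive] [Pretriangulated CX]
variable {CZ : Type*} [Category CZ] [HasZeroObject CZ] [Preadditive CZ]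
  [HasShift CZ ℤ] [∀ n : ℤ, (shiftFunctor CZ n).Additive] [Pretriangulated CZ]

/- The six gluing functors: `jl = j_!`, `js = j^*`, `jr = j_*`,
   `il = i^*`, `im = i_*`, `ir = i^!`; all of them are exact. -/
variable (jl : CU ⥤ CX) (js : CX ⥤ CU) (jr : CU ⥤ CX)
  (il : CX ⥤ CZ) (im : CZ ⥤ CX) (ir : CX ⥤ CZ)
  [jl.CommShift ℤ] [jl.IsTriangulated] [js.CommShift ℤ] [js.IsTriangulated]
  [jr.CommShift ℤ] [jr.IsTriangulated] [il.CommShift ℤ] [il.IsTriangulated]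
  [im.CommShift ℤ] [im.IsTriangulated] [ir.CommShift ℤ] [ir.IsTriangulated]
  [im.Full] [im.Faithful]
variable (adj₁ : jl ⊣ js) (adj₂ : js ⊣ jr) (adj₃ : il ⊣ im) (adj₄ : im ⊣ ir)

variable (wU : WeightStructure CU) (wX : WeightStructure CX) (wZ : WeightStructure CZ)

namespace WeightStructure

variable {C : Type*} [Category C] [HasZeroObject C] [Preadditive C]
    [HasShift C ℤ] [∀ n : ℤ, (shiftFunctor C n).Additive] [Pretriangulated C]
    (w : WeightStructure C)

lemma geW_of_retract {X Y : C} (h : Retract X Y) {n : ℤ} (hY : w.geW n Y) : w.geW n X :=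
  w.ge_retract _ _ (h.map (shiftFunctor C (-n))).retract hY

lemma isZero_of_le_of_geW_one {X : C} (hle : w.le X) (hge : w.geW 1 X) : IsZero X := by
  have h : (shiftNegShift X (1 : ℤ)).inv = 0 := w.orth _ hle hge
  rw [IsZero.iff_id_eq_zero, ← (shiftNegShift X (1 : ℤ)).inv_hom_id, h, zero_comp]

end WeightStructure

theorem no_nonzero_direct_factor_from_closed_part
    (hglue : IsGluing jl js jr il im ir adj₁ adj₂ adj₃ adj₄)
    (M : CX) (hM : wX.heart M ∧ wZ.leW (-1) (il.obj M) ∧ wZ.geW 1 (ir.obj M))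
    (N : CZ) (hN : wZ.heart N)
    (p : im.obj N ⟶ M) (q : M ⟶ im.obj N) (hpq : p ≫ q = 𝟙 (im.obj N)) :
    IsZero N := by
  obtain ⟨-, -, hir⟩ := hM
  -- `i^! i_* N ≅ N` since `i_*` is fully faithful, so `N` is a retract of `i^! M`.
  have hN_retract : Retract N (ir.obj M) :=
    (Retract.ofIso (asIso (adj₄.unit.app N))).trans ((Retract.mk p q hpq).map ir)
  exact wZ.isZero_of_le_of_geW_one hN.1 (wZ.geW_of_retract hN_retract hir)
end
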